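/- arXiv:1402.4862 — 3 statements merged into one kernel-verified Lean document; each statement's English description precedes it below -/
import Mathlib

section
/- The elementary symmetric polynomial e_k is Schur-concave on nonnegative vectors: if x, y ∈ R^N have nonnegative entries and x is majorized by y, then e_k(x) ≥ e_k(y). -/
/-- `x` is majorized by `y` (`x ≺ y`): every partial sum of `x` over a subset
is dominated by the sum of `y` over some subset of the same cardinality (this
is equivalent to domination of the sorted partial sums), and the total sums
agree. -/
def Majorizes {N : ℕ} (x y : Fin N → ℝ) : Prop :=
  (∀ A : Finset (Fin N), ∃ B : Finset (Fin N), B.card = A.card ∧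
      ∑ i ∈ A, x i ≤ ∑ i ∈ B, y i) ∧
    ∑ i, x i = ∑ i, y i

/-- The `k`-th elementary symmetric polynomial of `x_1, ..., x_N`. -/
def esymmFin {N : ℕ} (x : Fin N → ℝ) (k : ℕ) : ℝ :=
  ∑ J ∈ Finset.univ.powersetCard k, ∏ j ∈ J, x j

/-!
Sort both vectors decreasingly, so that majorization becomes domination of prefix sums. If
`x ≠ y`, let `l` be the first index with `y l < x l` and `j < l` an index with `x j < y j`.
Moving `t = min (y j - x j) (x l - y l)` from `y j` to `y l` preserves prefix domination and makes
one more coordinate agree with `x`. Since `y j - t ≥ x j ≥ x l ≥ y l + t`, the move keeps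
`y j + y l` and does not decrease `y j * y l`, so it does not decrease `e_k`, by
`e_k = e_k(r) + (y j + y l) e_{k-1}(r) + y j y l e_{k-2}(r)` with `r` the other coordinates.
Induct on the number of coordinates where `x` and `y` differ.
-/

open Finset

namespace Multiset

variable {R : Type*}

theorem esymm_cons_succ [CommSemiring R] (a : R) (s : Multiset R) (n : ℕ) :
    (a ::ₘ s).esymm (n + 1) = s.esymm (n + 1) + a * s.esymm n := by
  simp only [esymm, powersetCard_cons, map_add, sum_add, map_map, Function.comp_def, prod_cons,
    sum_map_mul_left]

theorem esymm_zero [CommSemiring R] (s : Multiset R) : s.esymm 0 = 1 := by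
  simp [esymm]

theorem esymm_nonneg [CommSemiring R] [PartialOrder R] [IsOrderedRing R] {s : Multiset R}
    (hs : ∀ a ∈ s, 0 ≤ a) (n : ℕ) : 0 ≤ s.esymm n :=
  sum_nonneg fun _ ht ↦ by
    obtain ⟨t, hts, rfl⟩ := mem_map.1 ht
    exact prod_nonneg fun a ha ↦ hs a (subset_of_le (mem_powersetCard.1 hts).1 ha)

theorem esymm_cons_cons_le [CommRing R] [PartialOrder R] [IsOrderedRing R] {a b a' b' : R}
    {s : Multiset R} (hs : ∀ c ∈ s, 0 ≤ c) (hsum : a + b = a' + b') (hprod : a * b ≤ a' * b')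
    (n : ℕ) : (a ::ₘ b ::ₘ s).esymm n ≤ (a' ::ₘ b' ::ₘ s).esymm n := by
  match n with
  | 0 => simp [esymm_zero]
  | 1 => simp only [esymm_cons_succ, esymm_zero]; linear_combination hsum
  | n + 2 =>
    simp only [esymm_cons_succ]
    have := mul_le_mul_of_nonneg_right hprod (esymm_nonneg hs n)
    linear_combination this + s.esymm (n + 1) * hsum

end Multiset

section Transfer

variable {ι : Type*} [DecidableEq ι]

theorem esymm_map_le_of_pair_transfer [Fintype ι] {y y' : ι → ℝ} {j l : ι} (hjl : j ≠ l)
    (hy : ∀ i, 0 ≤ y i) (hrest : ∀ i, i ≠ j → i ≠ l → y' i = y i) (hsum : y j + y l = y' j + y' l)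
    (hprod : y j * y l ≤ y' j * y' l) (n : ℕ) :
    (univ.val.map y).esymm n ≤ (univ.val.map y').esymm n := by
  set s := ((univ : Finset ι).erase j).erase l
  have huniv : (univ : Finset ι).val = j ::ₘ l ::ₘ s.val := by
    rw [← insert_val_of_notMem (notMem_erase l _),
      insert_erase (mem_erase.2 ⟨hjl.symm, mem_univ l⟩), ← insert_val_of_notMem (notMem_erase j _),
      insert_erase (mem_univ j)]
  have hs : s.val.map y' = s.val.map y := Multiset.map_congr rfl fun i hi ↦ by
    have hi : i ≠ l ∧ i ≠ j ∧ i ∈ univ := by simpa only [s, mem_erase] using Finset.mem_def.2 hi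
    exact hrest i hi.2.1 hi.1
  rw [huniv, Multiset.map_cons, Multiset.map_cons, Multiset.map_cons, Multiset.map_cons, hs]
  exact Multiset.esymm_cons_cons_le (by simpa using fun i _ ↦ hy i) hsum hprod n

def transfer (y : ι → ℝ) (j l : ι) (t : ℝ) : ι → ℝ :=
  y - Pi.single j t + Pi.single l t

variable {y : ι → ℝ} {j l : ι} {t : ℝ}

theorem transfer_apply_left (hjl : j ≠ l) : transfer y j l t j = y j - t := by
  simp [transfer, hjl]

theorem transfer_apply_right (hjl : j ≠ l) : transfer y j l t l = y l + t := by
  simp [transfer, hjl.symm]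

theorem transfer_apply_of_ne {i : ι} (hij : i ≠ j) (hil : i ≠ l) : transfer y j l t i = y i := by
  simp [transfer, hij, hil]

theorem sum_transfer (s : Finset ι) : ∑ i ∈ s, transfer y j l t i =
    ∑ i ∈ s, y i - (if j ∈ s then t else 0) + (if l ∈ s then t else 0) := by
  simp only [transfer, Pi.add_apply, Pi.sub_apply, sum_add_distrib, sum_sub_distrib, sum_pi_single']

theorem filter_ne_transfer_ssubset [Fintype ι] {x : ι → ℝ} (hjl : j ≠ l) (hj : x j ≠ y j)
    (hl : x l ≠ y l) (hmatch : x j = y j - t ∨ x l = y l + t) :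
    ({i | x i ≠ transfer y j l t i} : Finset ι) ⊂ ({i | x i ≠ y i} : Finset ι) := by
  have hsub : ({i | x i ≠ transfer y j l t i} : Finset ι) ⊆ ({i | x i ≠ y i} : Finset ι) := by
    intro i
    simp only [mem_filter, mem_univ, true_and]
    rcases eq_or_ne i j with rfl | hij
    · exact fun _ ↦ hj
    rcases eq_or_ne i l with rfl | hil
    · exact fun _ ↦ hl
    · rw [transfer_apply_of_ne hij hil]; exact id
  rw [ssubset_iff_of_subset hsub]
  rcases hmatch with hmatch | hmatch
  · exact ⟨j, by simpa using hj, by simpa [transfer_apply_left hjl] using hmatch⟩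
  · exact ⟨l, by simpa using hl, by simpa [transfer_apply_right hjl] using hmatch⟩

end Transfer

section Prefix

variable {ι : Type*} [LinearOrder ι] [LocallyFiniteOrderBot ι]

theorem sum_le_sum_Iic_of_antitone {M : Type*} [AddCommMonoid M] [PartialOrder M]
    [IsOrderedAddMonoid M] {f : ι → M} (hf : Antitone f) {s : Finset ι} {i : ι}
    (hs : #s = #(Iic i)) : ∑ a ∈ s, f a ≤ ∑ a ∈ Iic i, f a := by
  rw [← sum_inter_add_sum_sdiff s (Iic i), ← sum_inter_add_sum_sdiff (Iic i) s, inter_comm]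
  refine add_le_add le_rfl ?_
  calc ∑ a ∈ s \ Iic i, f a
      ≤ #(s \ Iic i) • f i := sum_le_card_nsmul _ _ _ fun a ha ↦
        hf (not_le.1 fun h ↦ (mem_sdiff.1 ha).2 (mem_Iic.2 h)).le
    _ = #(Iic i \ s) • f i := by rw [card_sdiff_comm hs]
    _ ≤ ∑ a ∈ Iic i \ s, f a := card_nsmul_le_sum _ _ _ fun a ha ↦
        hf (mem_Iic.1 (mem_sdiff.1 ha).1)

variable {x y : ι → ℝ} {j l : ι} {t : ℝ}

theorem prefix_le_transfer (hpre : ∀ i, ∑ a ∈ Iic i, x a ≤ ∑ a ∈ Iic i, y a) (hjl : j < l)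
    (hbelow : ∀ i < l, x i ≤ y i) (htj : t ≤ y j - x j) (i : ι) :
    ∑ a ∈ Iic i, x a ≤ ∑ a ∈ Iic i, transfer y j l t a := by
  rw [sum_transfer]
  by_cases hli : l ≤ i
  · simp only [mem_Iic, hli, hjl.le.trans hli, if_true]
    linarith [hpre i]
  by_cases hji : j ≤ i
  · -- every coordinate up to `i < l` has `x ≤ y`, so the gap at `i` already exceeds `y j - x j`
    have hgap : y j - x j ≤ ∑ a ∈ Iic i, (y a - x a) :=
      single_le_sum (fun a ha ↦ sub_nonneg.2 (hbelow a ((mem_Iic.1 ha).trans_lt (not_le.1 hli))))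
        (mem_Iic.2 hji)
    simp only [mem_Iic, hli, hji, if_true, if_false, sum_sub_distrib] at hgap ⊢
    linarith
  · simp only [mem_Iic, hli, hji, if_false]
    linarith [hpre i]

variable [Fintype ι]

theorem exists_transfer_pair (hpre : ∀ i, ∑ a ∈ Iic i, x a ≤ ∑ a ∈ Iic i, y a)
    (hsum : ∑ i, x i = ∑ i, y i) (hxy : x ≠ y) :
    ∃ j l, j < l ∧ x j < y j ∧ y l < x l ∧ ∀ i < l, x i ≤ y i := by
  have hdeficit : ∃ i, y i < x i := by
    by_contra! hle
    exact hxy (funext fun i ↦ (sum_eq_sum_iff_of_le fun i _ ↦ hle i).1 hsum i (mem_univ i))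
  obtain ⟨l, hl, hmin⟩ := exists_minimal_of_wellFoundedLT _ hdeficit
  have hbelow : ∀ i < l, x i ≤ y i := fun i hi ↦
    not_lt.1 fun h ↦ (hi.trans_le (hmin h hi.le)).false
  have hIio : ∑ a ∈ Iio l, x a < ∑ a ∈ Iio l, y a := by
    have := hpre l
    rw [← sum_Iio_add_eq_sum_Iic, ← sum_Iio_add_eq_sum_Iic] at this
    linarith
  obtain ⟨j, hj, hxj⟩ := exists_lt_of_sum_lt hIio
  exact ⟨j, l, mem_Iio.1 hj, hxj, hl, hbelow⟩

theorem exists_transfer_closer (hx : Antitone x) (hx0 : ∀ i, 0 ≤ x i) (hy0 : ∀ i, 0 ≤ y i)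
    (hpre : ∀ i, ∑ a ∈ Iic i, x a ≤ ∑ a ∈ Iic i, y a) (hsum : ∑ i, x i = ∑ i, y i)
    (hxy : x ≠ y) :
    ∃ y' : ι → ℝ, (∀ i, 0 ≤ y' i) ∧ (∀ i, ∑ a ∈ Iic i, x a ≤ ∑ a ∈ Iic i, y' a) ∧
      ∑ i, x i = ∑ i, y' i ∧ ({i | x i ≠ y' i} : Finset ι) ⊂ ({i | x i ≠ y i} : Finset ι) ∧
      ∀ n, (univ.val.map y).esymm n ≤ (univ.val.map y').esymm n := by
  obtain ⟨j, l, hjl, hj, hl, hbelow⟩ := exists_transfer_pair hpre hsum hxy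
  set t := min (y j - x j) (x l - y l)
  have ht0 : 0 ≤ t := le_min (by linarith) (by linarith)
  have htj : t ≤ y j - x j := min_le_left _ _
  have htl : t ≤ x l - y l := min_le_right _ _
  have hleft := transfer_apply_left (y := y) (t := t) hjl.ne
  have hright := transfer_apply_right (y := y) (t := t) hjl.ne
  have hrest : ∀ i, i ≠ j → i ≠ l → transfer y j l t i = y i := fun i ↦ transfer_apply_of_ne
  refine ⟨transfer y j l t, fun i ↦ ?_, prefix_le_transfer hpre hjl hbelow htj, ?_, ?_, ?_⟩
  · rcases eq_or_ne i j with rfl | hij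
    · linarith [hx0 i]
    rcases eq_or_ne i l with rfl | hil
    · linarith [hy0 i]
    · rw [hrest i hij hil]; exact hy0 i
  · rw [sum_transfer]; simp [hsum]
  · refine filter_ne_transfer_ssubset hjl.ne hj.ne hl.ne' ?_
    rcases min_choice (y j - x j) (x l - y l) with ht | ht
    · exact .inl (by linarith)
    · exact .inr (by linarith)
  · refine esymm_map_le_of_pair_transfer hjl.ne hy0 hrest (by rw [hleft, hright]; ring) ?_
    rw [hleft, hright]
    nlinarith [mul_nonneg ht0 (by linarith [hx hjl.le] : 0 ≤ y j - y l - 2 * t)]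

theorem esymm_map_le_of_prefix_le (hx : Antitone x) (hx0 : ∀ i, 0 ≤ x i) (hy0 : ∀ i, 0 ≤ y i)
    (hpre : ∀ i, ∑ a ∈ Iic i, x a ≤ ∑ a ∈ Iic i, y a) (hsum : ∑ i, x i = ∑ i, y i) (n : ℕ) :
    (univ.val.map y).esymm n ≤ (univ.val.map x).esymm n := by
  induction hd : #({i | x i ≠ y i} : Finset ι) using Nat.strong_induction_on generalizing y with
  | _ d ih =>
  obtain rfl | hxy := eq_or_ne x y
  · exact le_rfl
  obtain ⟨y', hy'0, hpre', hsum', hcloser, hle⟩ := exists_transfer_closer hx hx0 hy0 hpre hsum hxy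
  exact (hle n).trans (ih _ (hd ▸ card_lt_card hcloser) hy'0 hpre' hsum' rfl)

end Prefix

theorem Fin.exists_perm_antitone {N : ℕ} {α : Type*} [LinearOrder α] (f : Fin N → α) :
    ∃ σ : Equiv.Perm (Fin N), Antitone (f ∘ σ) :=
  ⟨Fin.revPerm.trans (Tuple.sort f), (Tuple.monotone_sort f).comp_antitone Fin.rev_anti⟩

theorem Majorizes.sum_Iic_le {N : ℕ} {x y : Fin N → ℝ} (h : Majorizes x y)
    (σ : Equiv.Perm (Fin N)) {τ : Equiv.Perm (Fin N)} (hτ : Antitone (y ∘ τ)) (i : Fin N) :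
    ∑ a ∈ Iic i, x (σ a) ≤ ∑ a ∈ Iic i, y (τ a) := by
  obtain ⟨B, hB, hAB⟩ := h.1 ((Iic i).map σ.toEmbedding)
  calc ∑ a ∈ Iic i, x (σ a) = ∑ a ∈ (Iic i).map σ.toEmbedding, x a := by simp
    _ ≤ ∑ b ∈ B, y b := hAB
    _ = ∑ b ∈ B.map τ.symm.toEmbedding, y (τ b) := by simp
    _ ≤ ∑ a ∈ Iic i, y (τ a) := sum_le_sum_Iic_of_antitone hτ (by simpa using hB)

theorem esymmFin_eq_esymm_map {N : ℕ} (x : Fin N → ℝ) (k : ℕ) :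
    esymmFin x k = (univ.val.map x).esymm k :=
  (Finset.esymm_map_val x univ k).symm

theorem esymmFin_comp_perm {N : ℕ} (x : Fin N → ℝ) (σ : Equiv.Perm (Fin N)) (k : ℕ) :
    esymmFin (x ∘ σ) k = esymmFin x k := by
  rw [esymmFin_eq_esymm_map, esymmFin_eq_esymm_map, ← Multiset.map_map, Multiset.map_univ_val_equiv]

/-- Schur-concavity of elementary symmetric polynomials on nonnegative
vectors: if `x ≺ y` then `e_k(x) ≥ e_k(y)`. -/
theorem esymm_schur_concave {N : ℕ} (k : ℕ) (x y : Fin N → ℝ)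
    (hx : ∀ i, 0 ≤ x i) (hy : ∀ i, 0 ≤ y i) (hmaj : Majorizes x y) :
    esymmFin y k ≤ esymmFin x k := by
  obtain ⟨σ, hσ⟩ := Fin.exists_perm_antitone x
  obtain ⟨τ, hτ⟩ := Fin.exists_perm_antitone y
  have hsum : ∑ i, x (σ i) = ∑ i, y (τ i) := by
    rw [Equiv.sum_comp, Equiv.sum_comp, hmaj.2]
  calc esymmFin y k = esymmFin (y ∘ τ) k := (esymmFin_comp_perm y τ k).symm
    _ ≤ esymmFin (x ∘ σ) k := by
      rw [esymmFin_eq_esymm_map, esymmFin_eq_esymm_map]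
      exact esymm_map_le_of_prefix_le hσ (fun i ↦ hx (σ i)) (fun i ↦ hy (τ i))
        (hmaj.sum_Iic_le σ hτ) hsum k
    _ = esymmFin x k := esymmFin_comp_perm x σ k
end

section
/- Let λ_1, ..., λ_N be nonnegative reals sorted in decreasing order, M < N, and Λ = ∑_{n=M+1}^N λ_n. Then e_k(λ_1, ..., λ_N) ≤ ∑_{j=0}^k (Λ^j / j!) e_{k−j}(λ_1, ..., λ_M). -/
/-!
Split the indices into the head `{0, …, M-1}` and the tail `{M, …, N-1}`. Comparing coefficients
in `∏ i, (1 + λ_i X)`, the `e_k` of a disjoint union is the convolution of the `e_j` of the two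
parts. Every tail factor is bounded by `e_j(tail) ≤ Λ ^ j / j!`, by induction on the tail: adding
one variable `a` to a set with sum `S` costs `e_{j+1} ↦ e_{j+1} + a e_j`, and
`S ^ (j+1) + (j+1) S ^ j a ≤ (S + a) ^ (j+1)` is Bernoulli's inequality.
-/

/-- The `k`-th elementary symmetric polynomial of `λ_1, ..., λ_m`
(indices `0, ..., m-1`). -/
def esymm (lam : ℕ → ℝ) (m k : ℕ) : ℝ :=
  ∑ J ∈ (Finset.range m).powersetCard k, ∏ j ∈ J, lam j

open Finset

section CommSemiring

open Polynomial

variable {ι R : Type*} [CommSemiring R]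

def esymmOn (f : ι → R) (s : Finset ι) (k : ℕ) : R :=
  ∑ t ∈ s.powersetCard k, ∏ i ∈ t, f i

@[simp]
lemma esymmOn_zero (f : ι → R) (s : Finset ι) : esymmOn f s 0 = 1 := by
  simp [esymmOn]

lemma coeff_prod_one_add_C_mul_X (f : ι → R) (s : Finset ι) (k : ℕ) :
    (∏ i ∈ s, (1 + C (f i) * X)).coeff k = esymmOn f s k := by
  simp only [prod_one_add, prod_mul_distrib, ← map_prod, prod_const, finsetSum_coeff,
    coeff_C_mul_X_pow, esymmOn, powersetCard_eq_filter, sum_filter, eq_comm]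

lemma esymmOn_union [DecidableEq ι] (f : ι → R) {s t : Finset ι} (h : Disjoint s t) (k : ℕ) :
    esymmOn f (s ∪ t) k = ∑ p ∈ antidiagonal k, esymmOn f s p.1 * esymmOn f t p.2 := by
  simp only [← coeff_prod_one_add_C_mul_X, prod_union h, coeff_mul]

lemma esymmOn_insert [DecidableEq ι] (f : ι → R) {a : ι} {s : Finset ι} (ha : a ∉ s)
    (k : ℕ) :
    esymmOn f (insert a s) (k + 1) = esymmOn f s (k + 1) + f a * esymmOn f s k := by
  simp only [← coeff_prod_one_add_C_mul_X, prod_insert ha, add_mul, one_mul, mul_assoc,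
    coeff_add, coeff_C_mul, coeff_X_mul]

end CommSemiring

lemma esymmOn_nonneg {ι R : Type*} [CommSemiring R] [PartialOrder R] [IsOrderedRing R]
    {f : ι → R} {s : Finset ι} (hf : ∀ i ∈ s, 0 ≤ f i) (k : ℕ) : 0 ≤ esymmOn f s k :=
  sum_nonneg fun _ ht ↦ prod_nonneg fun i hi ↦ hf i ((mem_powersetCard.1 ht).1 hi)

lemma esymmOn_le_sum_pow_div_factorial {ι R : Type*} [DecidableEq ι] [Field R] [LinearOrder R]
    [IsStrictOrderedRing R] {f : ι → R} {s : Finset ι}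
    (hf : ∀ i ∈ s, 0 ≤ f i) (k : ℕ) :
    esymmOn f s k ≤ (∑ i ∈ s, f i) ^ k / k.factorial := by
  induction s using Finset.induction_on generalizing k with
  | empty =>
    cases k with
    | zero => simp
    | succ k => simp [esymmOn, powersetCard_eq_empty.2 (by simp : #(∅ : Finset ι) < k + 1)]
  | @insert a s ha ih =>
    cases k with
    | zero => simp
    | succ k =>
      rw [forall_mem_insert] at hf
      set S := ∑ i ∈ s, f i
      have hS : 0 ≤ S := sum_nonneg hf.2
      calc esymmOn f (insert a s) (k + 1) = esymmOn f s (k + 1) + f a * esymmOn f s k :=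
            esymmOn_insert f ha k
        _ ≤ S ^ (k + 1) / ((k + 1).factorial : R) + f a * (S ^ k / k.factorial) := by
            gcongr
            · exact ih hf.2 _
            · exact hf.1
            · exact ih hf.2 _
        _ = (S ^ (k + 1) + (k + 1 : ℕ) * S ^ k * f a) / ((k + 1).factorial : R) := by
            rw [Nat.factorial_succ]; push_cast; field_simp
        _ ≤ (S + f a) ^ (k + 1) / ((k + 1).factorial : R) := by
            gcongr
            exact pow_add_mul_le_add_pow hS (by linarith [hf.1]) (k + 1)
        _ = (∑ i ∈ insert a s, f i) ^ (k + 1) / ((k + 1).factorial : R) := by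
            rw [sum_insert ha, add_comm]

theorem esymm_le_tail_bound_general (N M k : ℕ) (hMN : M < N) (lam : ℕ → ℝ)
    (hpos : ∀ n, 0 ≤ lam n)
    (Λ : ℝ) (hΛ : Λ = ∑ n ∈ Finset.Ico M N, lam n) :
    esymm lam N k ≤
      ∑ j ∈ Finset.range (k + 1), Λ ^ j / (j.factorial : ℝ) * esymm lam M (k - j) := by
  have hsplit : range N = Ico M N ∪ range M := by
    rw [range_eq_Ico, range_eq_Ico, union_comm, Ico_union_Ico_eq_Ico (Nat.zero_le M) hMN.le]
  have hdisj : Disjoint (Ico M N) (range M) := by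
    rw [range_eq_Ico]; exact (Ico_disjoint_Ico_consecutive 0 M N).symm
  change esymmOn lam (range N) k ≤ _
  rw [hsplit, esymmOn_union lam hdisj, Nat.sum_antidiagonal_eq_sum_range_succ
    (fun i j ↦ esymmOn lam (Ico M N) i * esymmOn lam (range M) j)]
  refine sum_le_sum fun j _ ↦
    mul_le_mul_of_nonneg_right ?_ (esymmOn_nonneg (fun n _ ↦ hpos n) _)
  exact hΛ ▸ esymmOn_le_sum_pow_div_factorial (fun n _ ↦ hpos n) j

/-- Proposition 2 (finite version): for nonnegative `λ_1 ≥ ... ≥ λ_N`, `M < N`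
and `Λ = ∑_{n=M+1}^N λ_n`,
`e_k(λ_1,...,λ_N) ≤ ∑_{j=0}^k (Λ^j / j!) e_{k−j}(λ_1,...,λ_M)`. -/
theorem esymm_le_tail_bound (N M k : ℕ) (hMN : M < N) (lam : ℕ → ℝ)
    (hpos : ∀ n, 0 ≤ lam n)
    (hsorted : ∀ i j, i ≤ j → j < N → lam j ≤ lam i)
    (Λ : ℝ) (hΛ : Λ = ∑ n ∈ Finset.Ico M N, lam n) :
    esymm lam N k ≤
      ∑ j ∈ Finset.range (k + 1), Λ ^ j / (j.factorial : ℝ) * esymm lam M (k - j) :=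
  esymm_le_tail_bound_general N M k hMN lam hpos Λ hΛ
end

section
/- Let (λ_n)_{n≥1} be a nonnegative summable sequence sorted in decreasing order with tail sum Λ_M = ∑_{n=M+1}^∞ λ_n. Then e_k(λ_1, λ_2, ...) ≤ ∑_{j=0}^k (Λ_M^j / j!) e_{k−j}(λ_1, ..., λ_M), where e_k of the infinite sequence is the supremum of e_k over finite truncations. -/
open Finset Polynomial
open scoped Nat

variable {ι R : Type*}

theorem coeff_prod_C_mul_X_add_one [CommSemiring R] (s : Finset ι) (f : ι → R) (k : ℕ) :
    (∏ i ∈ s, (C (f i) * X + 1)).coeff k = ∑ t ∈ s.powersetCard k, ∏ i ∈ t, f i := by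
  classical
  simp only [prod_add, prod_const_one, mul_one, prod_mul_distrib, prod_const, ← map_prod,
    finsetSum_coeff, coeff_C_mul_X_pow, powersetCard_eq_filter, sum_filter, eq_comm]

theorem sum_powersetCard_union_prod [CommSemiring R] [DecidableEq ι] {s t : Finset ι}
    (h : Disjoint s t) (f : ι → R) (k : ℕ) :
    ∑ u ∈ (s ∪ t).powersetCard k, ∏ i ∈ u, f i =
      ∑ j ∈ range (k + 1),
        (∑ u ∈ t.powersetCard j, ∏ i ∈ u, f i) * ∑ u ∈ s.powersetCard (k - j), ∏ i ∈ u, f i := by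
  simp only [← coeff_prod_C_mul_X_add_one]
  rw [prod_union h, mul_comm, coeff_mul,
    Nat.sum_antidiagonal_eq_sum_range_succ fun i j => coeff _ i * coeff _ j]

theorem sum_powersetCard_insert_prod [CommSemiring R] [DecidableEq ι] {s : Finset ι} {a : ι}
    (ha : a ∉ s) (f : ι → R) (j : ℕ) :
    ∑ u ∈ (insert a s).powersetCard (j + 1), ∏ i ∈ u, f i =
      ∑ u ∈ s.powersetCard (j + 1), ∏ i ∈ u, f i +
        f a * ∑ u ∈ s.powersetCard j, ∏ i ∈ u, f i := by
  simp only [← coeff_prod_C_mul_X_add_one, prod_insert ha, add_mul, one_mul, mul_assoc,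
    coeff_add, coeff_C_mul, coeff_X_mul, add_comm]

theorem factorial_mul_sum_powersetCard_prod_le_pow [CommSemiring R] [LinearOrder R]
    [IsOrderedRing R] [ExistsAddOfLE R] (s : Finset ι) {f : ι → R} (hf : ∀ i ∈ s, 0 ≤ f i) (j : ℕ) :
    j ! * ∑ t ∈ s.powersetCard j, ∏ i ∈ t, f i ≤ (∑ i ∈ s, f i) ^ j := by
  classical
  induction s using Finset.induction_on generalizing j with
  | empty =>
    obtain _ | j := j
    · simp
    · rw [powersetCard_eq_empty.2 (by simp)]
      simp
  | insert a s ha ih =>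
    obtain _ | j := j
    · simp
    have hfs : ∀ i ∈ s, 0 ≤ f i := fun i hi => hf i (mem_insert_of_mem hi)
    have hS : 0 ≤ ∑ i ∈ s, f i := sum_nonneg hfs
    have hfa : 0 ≤ f a := hf a (mem_insert_self a s)
    calc ((j + 1) ! : R) * ∑ t ∈ (insert a s).powersetCard (j + 1), ∏ i ∈ t, f i
        = (j + 1) ! * ∑ t ∈ s.powersetCard (j + 1), ∏ i ∈ t, f i
            + (j + 1 : ℕ) * (j ! * ∑ t ∈ s.powersetCard j, ∏ i ∈ t, f i) * f a := by
          rw [sum_powersetCard_insert_prod ha, Nat.factorial_succ]; push_cast; ring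
      _ ≤ (∑ i ∈ s, f i) ^ (j + 1) + (j + 1 : ℕ) * (∑ i ∈ s, f i) ^ j * f a := by
          gcongr <;> exact ih hfs _
      _ ≤ (∑ i ∈ insert a s, f i) ^ (j + 1) := by
          rw [sum_insert ha, add_comm (f a)]
          exact pow_add_mul_le_add_pow hS (add_nonneg (mul_nonneg zero_le_two hS) hfa) (j + 1)

variable {lam : ℕ → ℝ}

theorem esymm_nonneg (hpos : ∀ n, 0 ≤ lam n) (m k : ℕ) : 0 ≤ esymm lam m k :=
  sum_nonneg fun _ _ => prod_nonneg fun i _ => hpos i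

theorem esymm_mono (hpos : ∀ n, 0 ≤ lam n) (k : ℕ) : Monotone fun N => esymm lam N k :=
  fun _ _ h => sum_le_sum_of_subset_of_nonneg (powersetCard_mono (range_subset_range.2 h))
    fun _ _ _ => prod_nonneg fun i _ => hpos i

theorem esymm_le_sum_pow_div_factorial_mul_esymm (hpos : ∀ n, 0 ≤ lam n) {M N : ℕ} (hMN : M ≤ N)
    (k : ℕ) :
    esymm lam N k ≤
      ∑ j ∈ range (k + 1), (∑ i ∈ Ico M N, lam i) ^ j / j ! * esymm lam M (k - j) := by
  rw [esymm, range_eq_Ico, ← Ico_union_Ico_eq_Ico (Nat.zero_le M) hMN,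
    sum_powersetCard_union_prod (Ico_disjoint_Ico_consecutive 0 M N), ← range_eq_Ico]
  refine sum_le_sum fun j _ => mul_le_mul_of_nonneg_right ?_ (esymm_nonneg hpos M (k - j))
  rw [le_div_iff₀ (by positivity), mul_comm]
  exact factorial_mul_sum_powersetCard_prod_le_pow _ (fun i _ => hpos i) j

theorem esymm_inf_le_tail_bound_general (M k : ℕ) (lam : ℕ → ℝ)
    (hpos : ∀ n, 0 ≤ lam n) (hsum : Summable lam)
    (Λ : ℝ) (hΛ : Λ = ∑' n, lam (M + n)) :
    (⨆ N, esymm lam N k) ≤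
      ∑ j ∈ Finset.range (k + 1), Λ ^ j / (j.factorial : ℝ) * esymm lam M (k - j) := by
  have hsum_tail : Summable fun n => lam (M + n) := by
    simpa only [add_comm M] using (summable_nat_add_iff M).2 hsum
  refine ciSup_le fun N => ?_
  have hle_tail : ∑ i ∈ Ico M (max M N), lam i ≤ Λ := by
    rw [hΛ, sum_Ico_eq_sum_range]
    exact hsum_tail.sum_le_tsum _ fun n _ => hpos (M + n)
  calc esymm lam N k ≤ esymm lam (max M N) k := esymm_mono hpos k (le_max_right M N)
    _ ≤ _ := esymm_le_sum_pow_div_factorial_mul_esymm hpos (le_max_left M N) k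
    _ ≤ _ := by
      gcongr with j
      · exact esymm_nonneg hpos M (k - j)
      · exact sum_nonneg fun i _ => hpos i

/-- Proposition 2 (infinite version): for a nonnegative summable decreasing
sequence `λ` with tail sum `Λ_M = ∑_{n=M+1}^∞ λ_n`, the elementary symmetric
function of the infinite sequence (the supremum over finite truncations)
satisfies `e_k(λ_{1:∞}) ≤ ∑_{j=0}^k (Λ_M^j / j!) e_{k−j}(λ_1,...,λ_M)`. -/
theorem esymm_inf_le_tail_bound (M k : ℕ) (lam : ℕ → ℝ)
    (hpos : ∀ n, 0 ≤ lam n) (hanti : Antitone lam) (hsum : Summable lam)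
    (Λ : ℝ) (hΛ : Λ = ∑' n, lam (M + n)) :
    (⨆ N, esymm lam N k) ≤
      ∑ j ∈ Finset.range (k + 1), Λ ^ j / (j.factorial : ℝ) * esymm lam M (k - j) :=
  esymm_inf_le_tail_bound_general M k lam hpos hsum Λ hΛ
end
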